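/- Let Ω ⊆ ℝⁿ be an open convex set, T ⊆ ℝ a compact set, and h : ℝⁿ × T → ℝ continuous on Ω × T such that p ↦ h(p, τ) is convex on Ω and differentiable on Ω for every τ ∈ T, and such that for each p ∈ Ω the map τ ↦ ∇_p h(p, τ) is continuous on T. Define f(p) = max_{τ ∈ T} h(p, τ). Then for every p ∈ Ω, ∂f(p) = convexHull{ ∇_p h(p, τ) : τ ∈ T(p) }, where T(p) = {τ ∈ T : h(p, τ) = f(p)}. -/

import Mathlib

open scoped RealInnerProductSpace
open Filter Set Topology

/-!
Each active gradient `∇ₚh(p, τ)` is a subgradient of `f` at `p`, because `h(·, τ) ≤ f` with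
equality at `p`; subgradients form a convex set, so the convex hull lies in `∂f(p)`.
Conversely, the convex hull of the (compact) set of active gradients is compact, so a subgradient
`s` outside it is strictly separated from it by some direction `d`. For small `t > 0` the sets
`{τ ∈ T | f(p) + t⟪s, d⟫ ≤ h(p + t • d, τ)}` are nonempty (take a maximiser of `h(p + t • d, ·)`),
compact, and by convexity of `t ↦ h(p + t • d, τ)` they shrink as `t` decreases. A point `τ` of
their intersection is active and satisfies `⟪s, d⟫ ≤ ⟪∇ₚh(p, τ), d⟫`, contradicting the separation.
-/

theorem isCompact_convexHull {E : Type*} [AddCommGroup E] [Module ℝ E] [TopologicalSpace E]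
    [IsTopologicalAddGroup E] [ContinuousSMul ℝ E] [FiniteDimensional ℝ E] {A : Set E}
    (hA : IsCompact A) : IsCompact (convexHull ℝ A) := by
  set combos : ℕ → Set E := fun k =>
    (fun wz : (Fin k → ℝ) × (Fin k → E) => ∑ i, wz.1 i • wz.2 i) ''
      (stdSimplex ℝ (Fin k) ×ˢ univ.pi fun _ => A)
  have hcombos : ∀ k, IsCompact (combos k) := fun k =>
    ((isCompact_stdSimplex ℝ _).prod (isCompact_univ_pi fun _ => hA)).image (by fun_prop)
  -- Carathéodory: `finrank ℝ E + 1` points suffice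
  suffices convexHull ℝ A = ⋃ k : Fin (Module.finrank ℝ E + 2), combos k by
    rw [this]; exact isCompact_iUnion fun k => hcombos k
  refine Subset.antisymm (fun x hx => ?_) (iUnion_subset fun k => ?_)
  · obtain ⟨ι, _, z, w, hzA, hz, hw, hw₁, rfl⟩ := eq_pos_convex_span_of_mem_convexHull hx
    have hcard : Fintype.card ι < Module.finrank ℝ E + 2 := by
      have := hz.card_le_finrank_succ
      have := Submodule.finrank_le (vectorSpan ℝ (range z))
      omega
    let e := Fintype.equivFin ι
    refine mem_iUnion.2 ⟨⟨_, hcard⟩, (w ∘ e.symm, z ∘ e.symm),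
      ⟨⟨fun i => (hw _).le, (Equiv.sum_comp e.symm w).trans hw₁⟩,
        fun i _ => hzA (mem_range_self _)⟩, ?_⟩
    exact Equiv.sum_comp e.symm fun i => w i • z i
  · rintro _ ⟨⟨w, z⟩, ⟨hw, hz⟩, rfl⟩
    exact (convex_convexHull ℝ A).sum_mem (fun i _ => hw.1 i) hw.2
      fun i _ => subset_convexHull ℝ A (hz i (mem_univ i))

theorem ConvexOn.add_mul_le_of_add_mul_le {S : Set ℝ} {ψ : ℝ → ℝ} (hψ : ConvexOn ℝ S ψ)
    (h0 : 0 ∈ S) {t t' a c : ℝ} (ht' : t' ∈ S) (ht : 0 < t) (htt' : t ≤ t') (ha : ψ 0 ≤ a)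
    (h : a + t * c ≤ ψ t) : a + t' * c ≤ ψ t' := by
  have htS : t ∈ S := hψ.1.ordConnected.out h0 ht' ⟨ht.le, htt'⟩
  have ht'0 : 0 < t' := ht.trans_le htt'
  have hsec := hψ.secant_mono h0 htS ht' ht.ne' ht'0.ne' htt'
  rw [sub_zero, sub_zero, div_le_div_iff₀ ht ht'0] at hsec
  nlinarith

theorem IsCompact.exists_forall_add_mul_le {X : Type*} [TopologicalSpace X] [T2Space X]
    {T : Set X} (hT : IsCompact T) {S : Set ℝ} {φ : X → ℝ → ℝ} {a c : ℝ}
    (h0 : 0 ∈ S) (hS : ∃ t ∈ S, 0 < t) (hconv : ∀ τ ∈ T, ConvexOn ℝ S (φ τ))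
    (hcont : ∀ t ∈ S, ContinuousOn (fun τ => φ τ t) T) (hle : ∀ τ ∈ T, φ τ 0 ≤ a)
    (hex : ∀ t ∈ S, 0 < t → ∃ τ ∈ T, a + t * c ≤ φ τ t) :
    ∃ τ ∈ T, ∀ t ∈ S, 0 < t → a + t * c ≤ φ τ t := by
  let ι := {t : ℝ // t ∈ S ∧ 0 < t}
  have : Nonempty ι := let ⟨t, ht⟩ := hS; ⟨⟨t, ht⟩⟩
  let C : ι → Set X := fun t => T ∩ (fun τ => φ τ t) ⁻¹' Ici (a + t * c)
  have hC_closed : ∀ t, IsClosed (C t) := fun t =>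
    (hcont t t.2.1).preimage_isClosed_of_isClosed hT.isClosed isClosed_Ici
  have hC_mono : Monotone C := fun t t' htt' τ ⟨hτ, hτt⟩ =>
    ⟨hτ, (hconv τ hτ).add_mul_le_of_add_mul_le h0 t'.2.1 t.2.2 htt' (hle τ hτ) hτt⟩
  obtain ⟨τ, hτ⟩ := IsCompact.nonempty_iInter_of_directed_nonempty_isCompact_isClosed C
    hC_mono.directed_ge (fun t => hex t t.2.1 t.2.2)
    (fun t => hT.of_isClosed_subset (hC_closed t) inter_subset_left) hC_closed
  rw [mem_iInter] at hτ
  exact ⟨τ, (hτ (Classical.arbitrary ι)).1, fun t htS ht => (hτ ⟨t, htS, ht⟩).2⟩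

theorem HasDerivAt.le_of_eventually_le_slope {φ : ℝ → ℝ} {φ' x c : ℝ} (hφ : HasDerivAt φ φ' x)
    (h : ∀ᶠ t in 𝓝[>] x, c ≤ slope φ x t) : c ≤ φ' :=
  ge_of_tendsto ((hasDerivWithinAt_iff_tendsto_slope' self_notMem_Ioi).mp hφ.hasDerivWithinAt) h

section InnerProductSpace

variable {E : Type*} [NormedAddCommGroup E] [InnerProductSpace ℝ E]

def subdifferentialOn (Ω : Set E) (f : E → ℝ) (p : E) : Set E :=
  {s | ∀ q ∈ Ω, f p + ⟪s, q - p⟫ ≤ f q}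

theorem convex_subdifferentialOn (Ω : Set E) (f : E → ℝ) (p : E) :
    Convex ℝ (subdifferentialOn Ω f p) := by
  intro s₁ hs₁ s₂ hs₂ a b ha hb hab q hq
  rw [inner_add_left, real_inner_smul_left, real_inner_smul_left]
  linear_combination a * hs₁ q hq + b * hs₂ q hq + (f q - f p) * hab

theorem subdifferentialOn_subset_of_le {Ω : Set E} {φ f : E → ℝ} {p : E}
    (hle : ∀ q ∈ Ω, φ q ≤ f q) (heq : φ p = f p) :
    subdifferentialOn Ω φ p ⊆ subdifferentialOn Ω f p := fun _ hs q hq =>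
  heq ▸ (hs q hq).trans (hle q hq)

theorem ConvexOn.comp_line {Ω : Set E} {φ : E → ℝ} (hφ : ConvexOn ℝ Ω φ) (p d : E) :
    ConvexOn ℝ {t : ℝ | p + t • d ∈ Ω} fun t => φ (p + t • d) := by
  have hline : ⇑(AffineMap.lineMap (k := ℝ) p (p + d)) = fun t => p + t • d := by
    ext t
    simp [AffineMap.lineMap_apply_module', add_comm]
  have := hφ.comp_affineMap (AffineMap.lineMap p (p + d))
  rw [hline] at this
  exact this

variable [CompleteSpace E]

theorem HasGradientAt.hasDerivAt_comp_line {φ : E → ℝ} {G p : E} (hG : HasGradientAt φ G p)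
    (d : E) : HasDerivAt (fun t : ℝ => φ (p + t • d)) ⟪G, d⟫ 0 := by
  have hline : HasDerivAt (fun t : ℝ => p + t • d) d 0 := by
    simpa using ((hasDerivAt_id (0 : ℝ)).smul_const d).const_add p
  have hG' : HasFDerivAt φ (InnerProductSpace.toDual ℝ E G) (p + (0 : ℝ) • d) := by
    simpa using hG.hasFDerivAt
  have := hG'.comp_hasDerivAt (0 : ℝ) hline
  rwa [InnerProductSpace.toDual_apply_apply] at this

theorem HasGradientAt.mem_subdifferentialOn {Ω : Set E} {φ : E → ℝ} {G p : E}
    (hG : HasGradientAt φ G p) (hφ : ConvexOn ℝ Ω φ) (hp : p ∈ Ω) :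
    G ∈ subdifferentialOn Ω φ p := by
  intro q hq
  have := (hφ.comp_line p (q - p)).le_slope_of_hasDerivAt (x := 0) (y := 1) (by simpa)
    (by simpa) one_pos (hG.hasDerivAt_comp_line (q - p))
  simp only [slope_def_field, one_smul, add_sub_cancel, zero_smul, add_zero, sub_zero,
    div_one] at this
  linarith

theorem mem_closure_convexHull_of_forall_inner_le {A : Set E} {s : E}
    (h : ∀ d, ∃ a ∈ A, ⟪s, d⟫ ≤ ⟪a, d⟫) : s ∈ closure (convexHull ℝ A) := by
  by_contra hs
  obtain ⟨ℓ, u, hA, hu⟩ :=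
    geometric_hahn_banach_closed_point (convex_convexHull ℝ A).closure isClosed_closure hs
  obtain ⟨a, ha, hsa⟩ := h ((InnerProductSpace.toDual ℝ E).symm ℓ)
  have := hA a (subset_closure (subset_convexHull ℝ A ha))
  rw [real_inner_comm, InnerProductSpace.toDual_symm_apply, real_inner_comm,
    InnerProductSpace.toDual_symm_apply] at hsa
  linarith

theorem exists_active_inner_le_of_mem_subdifferentialOn {X : Type*} [TopologicalSpace X]
    [T2Space X] {Ω : Set E} (hΩ : IsOpen Ω) {T : Set X} (hT : IsCompact T) {h : E → X → ℝ}
    {f : E → ℝ} (hconv : ∀ τ ∈ T, ConvexOn ℝ Ω fun q => h q τ)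
    (hcont : ∀ q ∈ Ω, ContinuousOn (h q) T) (hf : ∀ q ∈ Ω, IsGreatest (h q '' T) (f q))
    {p : E} (hp : p ∈ Ω) {g : X → E} (hg : ∀ τ ∈ T, HasGradientAt (fun q => h q τ) (g τ) p)
    {s : E} (hs : s ∈ subdifferentialOn Ω f p) (d : E) :
    ∃ τ ∈ T, h p τ = f p ∧ ⟪s, d⟫ ≤ ⟪g τ, d⟫ := by
  have hS : {t : ℝ | p + t • d ∈ Ω} ∈ 𝓝 0 :=
    (hΩ.preimage (by fun_prop)).mem_nhds (by simpa using hp)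
  have hS' : ∀ᶠ t in 𝓝[>] (0 : ℝ), p + t • d ∈ Ω ∧ 0 < t :=
    Eventually.and (nhdsWithin_le_nhds hS) self_mem_nhdsWithin
  obtain ⟨τ, hτT, hτ⟩ := hT.exists_forall_add_mul_le (φ := fun τ t => h (p + t • d) τ)
    (mem_of_mem_nhds hS) hS'.exists (fun τ hτ => (hconv τ hτ).comp_line p d)
    (fun t ht => hcont _ ht) (fun τ hτ => by simpa using (hf p hp).2 (mem_image_of_mem _ hτ))
    fun t ht ht0 => by
      obtain ⟨τ, hτ, hτt⟩ := (hf _ ht).1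
      refine ⟨τ, hτ, ?_⟩
      simpa [hτt, real_inner_smul_right] using hs _ ht
  have hderiv := (hg τ hτT).hasDerivAt_comp_line d
  have hev : ∀ᶠ t in 𝓝[>] (0 : ℝ), f p + t * ⟪s, d⟫ ≤ h (p + t • d) τ :=
    hS'.mono fun t ht => hτ t ht.1 ht.2
  have hactive : h p τ = f p := by
    refine le_antisymm ((hf p hp).2 (mem_image_of_mem _ hτT)) ?_
    have hlim : Tendsto (fun t => h (p + t • d) τ - t * ⟪s, d⟫) (𝓝[>] 0) (𝓝 (h p τ)) := by
      have hlin : ContinuousAt (fun t : ℝ => t * ⟪s, d⟫) 0 := by fun_prop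
      simpa using (hderiv.continuousAt.tendsto.sub hlin.tendsto).mono_left nhdsWithin_le_nhds
    exact ge_of_tendsto hlim (hev.mono fun t ht => by linarith)
  refine ⟨τ, hτT, hactive, hderiv.le_of_eventually_le_slope ?_⟩
  filter_upwards [hev, self_mem_nhdsWithin] with t ht (ht0 : 0 < t)
  rw [slope_def_field, sub_zero, le_div_iff₀ ht0]
  simp only [zero_smul, add_zero, hactive]
  linarith

end InnerProductSpace

theorem stmt_2 {n : ℕ} (Ω : Set (EuclideanSpace ℝ (Fin n))) (hΩo : IsOpen Ω)
    (T : Set ℝ) (hT : IsCompact T) (hTne : T.Nonempty)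
    (h : EuclideanSpace ℝ (Fin n) → ℝ → ℝ)
    (g : EuclideanSpace ℝ (Fin n) → ℝ → EuclideanSpace ℝ (Fin n))
    (hcont : ContinuousOn (fun q : EuclideanSpace ℝ (Fin n) × ℝ => h q.1 q.2) (Ω ×ˢ T))
    (hconv : ∀ τ ∈ T, ConvexOn ℝ Ω fun p => h p τ)
    (hdiff : ∀ τ ∈ T, ∀ p ∈ Ω, HasGradientAt (fun p => h p τ) (g p τ) p)
    (hgcont : ∀ p ∈ Ω, ContinuousOn (fun τ => g p τ) T)
    (f : EuclideanSpace ℝ (Fin n) → ℝ)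
    (hf : ∀ p, f p = sSup ((fun τ => h p τ) '' T)) :
    ∀ p ∈ Ω,
      {s : EuclideanSpace ℝ (Fin n) | ∀ q ∈ Ω, f p + ⟪s, q - p⟫ ≤ f q} =
        convexHull ℝ {x | ∃ τ ∈ T, h p τ = f p ∧ g p τ = x} := by
  intro p hp
  have hcont' : ∀ q ∈ Ω, ContinuousOn (h q) T := fun q hq =>
    hcont.comp (continuous_const.prodMk continuous_id).continuousOn fun τ hτ => ⟨hq, hτ⟩
  have hmax : ∀ q ∈ Ω, IsGreatest (h q '' T) (f q) := fun q hq => by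
    obtain ⟨τ, hτ, hτmax⟩ := hT.exists_isMaxOn hTne (hcont' q hq)
    have hgreatest : IsGreatest (h q '' T) (h q τ) :=
      ⟨mem_image_of_mem _ hτ, forall_mem_image.2 hτmax⟩
    rwa [hf, hgreatest.csSup_eq]
  set A := {x | ∃ τ ∈ T, h p τ = f p ∧ g p τ = x}
  have hA : IsCompact A := by
    have hactive : IsCompact (T ∩ h p ⁻¹' {f p}) := hT.of_isClosed_subset
      ((hcont' p hp).preimage_isClosed_of_isClosed hT.isClosed isClosed_singleton)
      inter_subset_left
    convert hactive.image_of_continuousOn ((hgcont p hp).mono inter_subset_left) using 1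
    ext x
    simp [A, and_assoc]
  show subdifferentialOn Ω f p = convexHull ℝ A
  refine Subset.antisymm (fun s hs => ?_) (convexHull_min ?_ (convex_subdifferentialOn Ω f p))
  · rw [← (isCompact_convexHull hA).isClosed.closure_eq]
    refine mem_closure_convexHull_of_forall_inner_le fun d => ?_
    obtain ⟨τ, hτ, hact, hle⟩ := exists_active_inner_le_of_mem_subdifferentialOn hΩo hT hconv
      hcont' hmax hp (fun τ hτ => hdiff τ hτ p hp) hs d
    exact ⟨g p τ, ⟨τ, hτ, hact, rfl⟩, hle⟩
  · rintro _ ⟨τ, hτ, hact, rfl⟩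
    exact subdifferentialOn_subset_of_le (fun q hq => (hmax q hq).2 (mem_image_of_mem _ hτ))
      hact ((hdiff τ hτ p hp).mem_subdifferentialOn (hconv τ hτ) hp)
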